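/- If the IFS {S_j}_{j=1}^N of contractive similitudes satisfies the weak separation condition with function γ(·), then every vertex of the quotient graph (X˜, 𝓔) has degree at most γ(2κ + |K|) + γ(r(2κ + |K|)) + γ(r⁻¹(2κ + |K|)), where |K| denotes the diameter of the self-similar set K; in particular (X˜, 𝓔) is of bounded degree. -/

import Mathlib

open Metric Filter

namespace HypIFS

/-- Euclidean space `ℝ^d`. -/
abbrev Euc (d : ℕ) := EuclideanSpace ℝ (Fin d)

/-- The distance `dist(A, B)` between two subsets of a metric space. -/
noncomputable def setDist {E : Type*} [PseudoMetricSpace E] (A B : Set E) : ℝ :=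
  sInf (Set.image2 dist A B)

variable {d N : ℕ}

/-- For a word `x = i₁⋯i_k`, the composition `S_x = S_{i₁} ∘ ⋯ ∘ S_{i_k}`. -/
def sWord (S : Fin N → Euc d → Euc d) : List (Fin N) → Euc d → Euc d :=
  fun w => w.foldr (fun i f => S i ∘ f) id

/-- For a word `x = i₁⋯i_k`, the product `r_x = r_{i₁} ⋯ r_{i_k}` of contraction ratios. -/
def rWord (ρ : Fin N → ℝ) (w : List (Fin N)) : ℝ := (w.map ρ).prod

/-- The coding level `𝓙_n = {i₁⋯i_k : r_{i₁⋯i_k} ≤ rⁿ < r_{i₁⋯i_{k−1}}}`,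
with `𝓙_0` consisting of the empty word. -/
def Jlevel (ρ : Fin N → ℝ) (r : ℝ) (n : ℕ) : Set (List (Fin N)) :=
  if n = 0 then {([] : List (Fin N))}
  else {w | rWord ρ w ≤ r ^ n ∧ r ^ n < rWord ρ w.dropLast}

/-- The vertical (parent–child) edge relation: `x ∈ 𝓙_n` is the initial segment
of `y ∈ 𝓙_{n+1}`. -/
def EV (ρ : Fin N → ℝ) (r : ℝ) (x y : List (Fin N)) : Prop :=
  ∃ n : ℕ, x ∈ Jlevel ρ r n ∧ y ∈ Jlevel ρ r (n + 1) ∧ x <+: y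

/-- The horizontal edge relation: `x ≠ y` in the same level `𝓙_n` with
`dist(K_x, K_y) ≤ κ rⁿ`. -/
def EH (S : Fin N → Euc d → Euc d) (ρ : Fin N → ℝ) (r κ : ℝ) (K : Set (Euc d))
    (x y : List (Fin N)) : Prop :=
  ∃ n : ℕ, x ∈ Jlevel ρ r n ∧ y ∈ Jlevel ρ r n ∧ x ≠ y ∧
    setDist (sWord S x '' K) (sWord S y '' K) ≤ κ * r ^ n

/-- The augmented tree `(X, 𝓔)`, `𝓔 = 𝓔_v ∪ 𝓔_h`, as a graph on the word space
(words belonging to no level `𝓙_n` are isolated vertices). -/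
def augIFS (S : Fin N → Euc d → Euc d) (ρ : Fin N → ℝ) (r κ : ℝ) (K : Set (Euc d)) :
    SimpleGraph (List (Fin N)) where
  Adj x y := (EV ρ r x y ∨ EV ρ r y x ∨ EH S ρ r κ K x y ∨ EH S ρ r κ K y x) ∧ x ≠ y
  symm := by
    constructor
    rintro x y ⟨h1 | h2 | h3 | h4, hne⟩
    · exact ⟨Or.inr (Or.inl h1), hne.symm⟩
    · exact ⟨Or.inl h2, hne.symm⟩
    · exact ⟨Or.inr (Or.inr (Or.inr h3)), hne.symm⟩
    · exact ⟨Or.inr (Or.inr (Or.inl h4)), hne.symm⟩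
  loopless := ⟨fun x h => h.2 rfl⟩

/-- A graph is of bounded degree if `sup_x deg(x) < ∞`. -/
def BddDeg {V : Type*} (G : SimpleGraph V) : Prop :=
  ∃ M : ℕ, ∀ x : V, {y | G.Adj x y}.Finite ∧ {y | G.Adj x y}.ncard ≤ M

/-- Vertical edges of the quotient graph `X˜`: classes (recorded as a level
together with a map) in consecutive levels having representatives `x, y` with
`x = y⁻¹`. -/
def EVq (S : Fin N → Euc d → Euc d) (ρ : Fin N → ℝ) (r : ℝ)
    (u v : ℕ × (Euc d → Euc d)) : Prop :=
  u.1 + 1 = v.1 ∧ ∃ x y : List (Fin N), x ∈ Jlevel ρ r u.1 ∧ y ∈ Jlevel ρ r v.1 ∧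
    sWord S x = u.2 ∧ sWord S y = v.2 ∧ x <+: y

/-- Horizontal edges of the quotient graph `X˜`: distinct classes in the same
level having representatives `x, y` with `dist(K_x, K_y) ≤ κ rⁿ`. -/
def EHq (S : Fin N → Euc d → Euc d) (ρ : Fin N → ℝ) (r κ : ℝ) (K : Set (Euc d))
    (u v : ℕ × (Euc d → Euc d)) : Prop :=
  u.1 = v.1 ∧ u ≠ v ∧ ∃ x y : List (Fin N), x ∈ Jlevel ρ r u.1 ∧ y ∈ Jlevel ρ r u.1 ∧
    sWord S x = u.2 ∧ sWord S y = v.2 ∧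
    setDist (sWord S x '' K) (sWord S y '' K) ≤ κ * r ^ u.1

/-- The quotient augmented tree `(X˜, 𝓔)`, identifying words `x, y` in the same
level with `S_x = S_y`; a class is recorded as its level together with its map
(pairs that arise from no word are isolated vertices). -/
def quotIFS (S : Fin N → Euc d → Euc d) (ρ : Fin N → ℝ) (r κ : ℝ) (K : Set (Euc d)) :
    SimpleGraph (ℕ × (Euc d → Euc d)) where
  Adj u v := (EVq S ρ r u v ∨ EVq S ρ r v u ∨ EHq S ρ r κ K u v ∨ EHq S ρ r κ K v u) ∧ u ≠ v
  symm := by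
    constructor
    rintro u v ⟨h1 | h2 | h3 | h4, hne⟩
    · exact ⟨Or.inr (Or.inl h1), hne.symm⟩
    · exact ⟨Or.inl h2, hne.symm⟩
    · exact ⟨Or.inr (Or.inr (Or.inr h3)), hne.symm⟩
    · exact ⟨Or.inr (Or.inr (Or.inl h4)), hne.symm⟩
  loopless := ⟨fun u h => h.2 rfl⟩

/-- The weak separation condition with bound `γ` for diameter-constant `c`:
for any `n` and any `D` with `diam D ≤ c rⁿ`, the set of distinct maps
`{S_x : x ∈ 𝓙_n, S_x(K) ∩ D ≠ ∅}` has at most `γ` elements. -/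
def WSCbound (S : Fin N → Euc d → Euc d) (ρ : Fin N → ℝ) (r : ℝ) (K : Set (Euc d))
    (c : ℝ) (γ : ℕ) : Prop :=
  ∀ (n : ℕ) (D : Set (Euc d)), Metric.diam D ≤ c * r ^ n →
    {f : Euc d → Euc d | ∃ x ∈ Jlevel ρ r n, sWord S x = f ∧
      ((sWord S x '' K) ∩ D).Nonempty}.Finite ∧
    {f : Euc d → Euc d | ∃ x ∈ Jlevel ρ r n, sWord S x = f ∧
      ((sWord S x '' K) ∩ D).Nonempty}.ncard ≤ γ

/-- The weak separation condition. -/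
def WSC (S : Fin N → Euc d → Euc d) (ρ : Fin N → ℝ) (r : ℝ) (K : Set (Euc d)) : Prop :=
  ∀ c : ℝ, 0 < c → ∃ γ : ℕ, WSCbound S ρ r K c γ

/-! The neighbours of a class `(n, S_x)` all lie in levels `n - 1, n, n + 1`, and each of their maps
`S_y` has `S_y(K)` meeting the closed `κ rⁿ`-neighbourhood `D` of `S_x(K)`, a set of diameter at most
`(2κ + |K|) rⁿ`. Measured against the scales `r^{n-1}, rⁿ, r^{n+1}`, the weak separation
condition bounds the number of such maps in each level by `γ(r(2κ + |K|))`, `γ(2κ + |K|)` and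
`γ(r⁻¹(2κ + |K|))` respectively. -/

lemma setDist_comm {E : Type*} [PseudoMetricSpace E] (A B : Set E) :
    setDist A B = setDist B A := by
  rw [setDist, setDist, Set.image2_comm fun a b => dist_comm a b]

lemma exists_mem_cthickening_of_setDist_le {E : Type*} [PseudoMetricSpace E] {A B : Set E}
    {δ : ℝ} (hA : A.Nonempty) (hB : IsCompact B) (hBne : B.Nonempty) (h : setDist A B ≤ δ) :
    (B ∩ cthickening δ A).Nonempty := by
  obtain ⟨b, hb, hmin⟩ := hB.exists_isMinOn hBne (continuous_infDist_pt A).continuousOn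
  have hbδ : infDist b A ≤ δ := by
    refine le_trans (le_csInf (hA.image2 ⟨b, hb⟩) ?_) h
    rintro _ ⟨a, ha, b', hb', rfl⟩
    calc infDist b A ≤ infDist b' A := hmin hb'
      _ ≤ dist b' a := infDist_le_dist_of_mem ha
      _ = dist a b' := dist_comm b' a
  refine ⟨b, hb, ?_⟩
  rw [mem_cthickening_iff,
    ENNReal.le_ofReal_iff_toReal_le (infEDist_ne_top hA) (infDist_nonneg.trans hbδ)]
  exact hbδ

lemma finite_and_ncard_le_of_subset_union {β : Type*} {T U V : Set β} {a b : ℕ}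
    (hT : T ⊆ U ∪ V) (hU : U.Finite ∧ U.ncard ≤ a) (hV : V.Finite ∧ V.ncard ≤ b) :
    T.Finite ∧ T.ncard ≤ a + b :=
  ⟨(hU.1.union hV.1).subset hT, (Set.ncard_le_ncard hT (hU.1.union hV.1)).trans <|
    (Set.ncard_union_le U V).trans (add_le_add hU.2 hV.2)⟩

section Words

variable {S : Fin N → Euc d → Euc d} {ρ : Fin N → ℝ} {r : ℝ} {K : Set (Euc d)}

lemma sWord_append (S : Fin N → Euc d → Euc d) (x y : List (Fin N)) :
    sWord S (x ++ y) = sWord S x ∘ sWord S y := by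
  induction x with
  | nil => rfl
  | cons i x ih => exact congrArg (S i ∘ ·) ih

lemma dist_sWord (hsim : ∀ j a b, dist (S j a) (S j b) = ρ j * dist a b)
    (w : List (Fin N)) (a b : Euc d) :
    dist (sWord S w a) (sWord S w b) = rWord ρ w * dist a b := by
  induction w with
  | nil => simp [sWord, rWord]
  | cons i w ih =>
    simp only [sWord, rWord, List.foldr_cons, List.map_cons, List.prod_cons,
      Function.comp_apply] at ih ⊢
    rw [hsim, ih, mul_assoc]

lemma rWord_pos (hρ0 : ∀ j, 0 < ρ j) (w : List (Fin N)) : 0 < rWord ρ w :=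
  List.prod_pos fun _ hx => by
    obtain ⟨j, -, rfl⟩ := List.mem_map.1 hx
    exact hρ0 j

lemma lipschitzWith_sWord (hρ0 : ∀ j, 0 < ρ j)
    (hsim : ∀ j a b, dist (S j a) (S j b) = ρ j * dist a b) (w : List (Fin N)) :
    LipschitzWith (rWord ρ w).toNNReal (sWord S w) :=
  LipschitzWith.of_dist_le_mul fun a b => by
    rw [dist_sWord hsim, Real.coe_toNNReal _ (rWord_pos hρ0 w).le]

lemma image_sWord_subset (hKinv : K = ⋃ j, S j '' K) (w : List (Fin N)) :
    sWord S w '' K ⊆ K := by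
  induction w with
  | nil => simp [sWord]
  | cons i w ih =>
    rw [show sWord S (i :: w) = S i ∘ sWord S w from rfl, Set.image_comp]
    refine (Set.image_mono ih).trans ?_
    conv_rhs => rw [hKinv]
    exact Set.subset_iUnion (fun j => S j '' K) i

lemma image_sWord_subset_of_prefix (hKinv : K = ⋃ j, S j '' K) {x y : List (Fin N)}
    (h : x <+: y) : sWord S y '' K ⊆ sWord S x '' K := by
  obtain ⟨t, rfl⟩ := h
  rw [sWord_append, Set.image_comp]
  exact Set.image_mono (image_sWord_subset hKinv t)

lemma rWord_le_of_mem_Jlevel {n : ℕ} {x : List (Fin N)} (hx : x ∈ Jlevel ρ r n) :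
    rWord ρ x ≤ r ^ n := by
  unfold Jlevel at hx
  split_ifs at hx with hn
  · subst hn hx
    simp [rWord]
  · exact hx.1

lemma diam_image_sWord_le (hρ0 : ∀ j, 0 < ρ j)
    (hsim : ∀ j a b, dist (S j a) (S j b) = ρ j * dist a b) (hK : Bornology.IsBounded K)
    {n : ℕ} {x : List (Fin N)} (hx : x ∈ Jlevel ρ r n) :
    diam (sWord S x '' K) ≤ diam K * r ^ n := by
  calc diam (sWord S x '' K) ≤ rWord ρ x * diam K := by
        simpa [Real.coe_toNNReal _ (rWord_pos hρ0 x).le] using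
          (lipschitzWith_sWord hρ0 hsim x).diam_image_le K hK
    _ ≤ r ^ n * diam K := by gcongr; exact rWord_le_of_mem_Jlevel hx
    _ = diam K * r ^ n := mul_comm _ _

end Words

def wscMaps (S : Fin N → Euc d → Euc d) (ρ : Fin N → ℝ) (r : ℝ) (K : Set (Euc d)) (n : ℕ)
    (D : Set (Euc d)) : Set (Euc d → Euc d) :=
  {f | ∃ x ∈ Jlevel ρ r n, sWord S x = f ∧ ((sWord S x '' K) ∩ D).Nonempty}

lemma WSCbound.image_prodMk {S : Fin N → Euc d → Euc d} {ρ : Fin N → ℝ} {r c : ℝ}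
    {K : Set (Euc d)} {γ : ℕ} (hγ : WSCbound S ρ r K c γ) {m : ℕ} {D : Set (Euc d)}
    (hD : diam D ≤ c * r ^ m) :
    (Prod.mk m '' wscMaps S ρ r K m D).Finite ∧ (Prod.mk m '' wscMaps S ρ r K m D).ncard ≤ γ :=
  ⟨(hγ m D hD).1.image _, (Set.ncard_image_le (hγ m D hD).1).trans (hγ m D hD).2⟩

section Quotient

variable {S : Fin N → Euc d → Euc d} {ρ : Fin N → ℝ} {r κ : ℝ} {K : Set (Euc d)}

lemma EHq.symm {u v : ℕ × (Euc d → Euc d)} (h : EHq S ρ r κ K u v) : EHq S ρ r κ K v u := by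
  obtain ⟨hl, hne, x, y, hx, hy, hSx, hSy, hdist⟩ := h
  rw [setDist_comm, hl] at hdist
  exact ⟨hl.symm, hne.symm, y, x, hl ▸ hy, hl ▸ hx, hSy, hSx, hdist⟩

lemma quotIFS_adj_iff {u v : ℕ × (Euc d → Euc d)} :
    (quotIFS S ρ r κ K).Adj u v ↔ (EVq S ρ r u v ∨ EVq S ρ r v u ∨ EHq S ρ r κ K u v) ∧ u ≠ v :=
  and_congr_left' <| or_congr_right <| or_congr_right <| or_iff_left_of_imp EHq.symm

lemma exists_mem_Jlevel_of_quotIFS_adj {n : ℕ} {f : Euc d → Euc d} {u : ℕ × (Euc d → Euc d)}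
    (h : (quotIFS S ρ r κ K).Adj (n, f) u) : ∃ x ∈ Jlevel ρ r n, sWord S x = f := by
  rcases (quotIFS_adj_iff.1 h).1 with ⟨-, x, -, hx, -, hSx, -, -⟩ | ⟨-, -, y, -, hy, -, hSy, -⟩ |
    ⟨-, -, x, -, hx, -, hSx, -, -⟩
  exacts [⟨x, hx, hSx⟩, ⟨y, hy, hSy⟩, ⟨x, hx, hSx⟩]

lemma mem_wscMaps_of_quotIFS_adj (hρ0 : ∀ j, 0 < ρ j)
    (hsim : ∀ j a b, dist (S j a) (S j b) = ρ j * dist a b) (hKc : IsCompact K)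
    (hKne : K.Nonempty) (hKinv : K = ⋃ j, S j '' K) {n m : ℕ} {f g : Euc d → Euc d}
    (h : (quotIFS S ρ r κ K).Adj (n, f) (m, g)) :
    (m + 1 = n ∨ m = n ∨ m = n + 1) ∧ g ∈ wscMaps S ρ r K m (cthickening (κ * r ^ n) (f '' K)) := by
  have hfD : f '' K ⊆ cthickening (κ * r ^ n) (f '' K) := self_subset_cthickening _
  rcases (quotIFS_adj_iff.1 h).1 with
    ⟨hm, x, y, -, hy, rfl, rfl, hxy⟩ | ⟨hm, x, y, hx, -, rfl, rfl, hxy⟩ |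
      ⟨hm, -, x, y, -, hy, rfl, rfl, hdist⟩
  · refine ⟨Or.inr (Or.inr hm.symm), y, hy, rfl, ?_⟩
    exact (hKne.image _).mono fun p hp => ⟨hp, hfD (image_sWord_subset_of_prefix hKinv hxy hp)⟩
  · refine ⟨Or.inl hm, x, hx, rfl, ?_⟩
    exact (hKne.image _).mono fun p hp => ⟨image_sWord_subset_of_prefix hKinv hxy hp, hfD hp⟩
  · refine ⟨Or.inr (Or.inl hm.symm), y, (show n = m from hm) ▸ hy, rfl, ?_⟩
    exact exists_mem_cthickening_of_setDist_le (hKne.image _)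
      (hKc.image (lipschitzWith_sWord hρ0 hsim y).continuous) (hKne.image _) hdist

lemma diam_cthickening_image_sWord_le (hρ0 : ∀ j, 0 < ρ j)
    (hsim : ∀ j a b, dist (S j a) (S j b) = ρ j * dist a b) (hK : Bornology.IsBounded K)
    (hr0 : 0 ≤ r) (hκ : 0 ≤ κ) {n : ℕ} {x : List (Fin N)} (hx : x ∈ Jlevel ρ r n) :
    diam (cthickening (κ * r ^ n) (sWord S x '' K)) ≤ (2 * κ + diam K) * r ^ n :=
  calc _ ≤ diam (sWord S x '' K) + 2 * (κ * r ^ n) := diam_cthickening_le _ (by positivity)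
    _ ≤ diam K * r ^ n + 2 * (κ * r ^ n) := by grw [diam_image_sWord_le hρ0 hsim hK hx]
    _ = (2 * κ + diam K) * r ^ n := by ring

theorem quotIFS_neighborSet_finite_and_ncard_le (hρ0 : ∀ j, 0 < ρ j)
    (hsim : ∀ j a b, dist (S j a) (S j b) = ρ j * dist a b) (hr0 : 0 < r) (hκ : 0 ≤ κ)
    (hKc : IsCompact K) (hKne : K.Nonempty) (hKinv : K = ⋃ j, S j '' K) {γ₀ γ₁ γ₂ : ℕ}
    (h₀ : WSCbound S ρ r K (2 * κ + diam K) γ₀)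
    (h₁ : WSCbound S ρ r K (r * (2 * κ + diam K)) γ₁)
    (h₂ : WSCbound S ρ r K (r⁻¹ * (2 * κ + diam K)) γ₂) (v : ℕ × (Euc d → Euc d)) :
    {u | (quotIFS S ρ r κ K).Adj v u}.Finite ∧
      {u | (quotIFS S ρ r κ K).Adj v u}.ncard ≤ γ₀ + γ₁ + γ₂ := by
  obtain ⟨n, f⟩ := v
  rcases Set.eq_empty_or_nonempty {u | (quotIFS S ρ r κ K).Adj (n, f) u} with hempty | ⟨u, hu⟩
  · simp [hempty]
  obtain ⟨x, hx, rfl⟩ := exists_mem_Jlevel_of_quotIFS_adj hu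
  set D := cthickening (κ * r ^ n) (sWord S x '' K)
  have hD : diam D ≤ (2 * κ + diam K) * r ^ n :=
    diam_cthickening_image_sWord_le hρ0 hsim hKc.isBounded hr0.le hκ hx
  have hnbr := fun {m g} (h : (quotIFS S ρ r κ K).Adj (n, sWord S x) (m, g)) =>
    mem_wscMaps_of_quotIFS_adj hρ0 hsim hKc hKne hKinv h
  have h₀' := h₀.image_prodMk hD
  have h₂' := h₂.image_prodMk (m := n + 1) <| hD.trans_eq <| by
    rw [pow_succ]
    field_simp
  rcases n with _ | p
  · have hsub : {u | (quotIFS S ρ r κ K).Adj (0, sWord S x) u} ⊆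
        Prod.mk 0 '' wscMaps S ρ r K 0 D ∪ Prod.mk 1 '' wscMaps S ρ r K 1 D := by
      rintro ⟨m, g⟩ hadj
      obtain ⟨hm | rfl | rfl, hg⟩ := hnbr hadj
      exacts [absurd hm m.succ_ne_zero, Or.inl ⟨g, hg, rfl⟩, Or.inr ⟨g, hg, rfl⟩]
    exact (finite_and_ncard_le_of_subset_union hsub h₀' h₂').imp_right (·.trans (by omega))
  · have h₁' := h₁.image_prodMk (m := p) <| hD.trans_eq <| by ring
    have hsub : {u | (quotIFS S ρ r κ K).Adj (p + 1, sWord S x) u} ⊆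
        Prod.mk (p + 1) '' wscMaps S ρ r K (p + 1) D ∪ Prod.mk p '' wscMaps S ρ r K p D ∪
          Prod.mk (p + 2) '' wscMaps S ρ r K (p + 2) D := by
      rintro ⟨m, g⟩ hadj
      obtain ⟨hm | rfl | rfl, hg⟩ := hnbr hadj
      · cases Nat.succ_injective hm
        exact Or.inl (Or.inr ⟨g, hg, rfl⟩)
      exacts [Or.inl (Or.inl ⟨g, hg, rfl⟩), Or.inr ⟨g, hg, rfl⟩]
    exact finite_and_ncard_le_of_subset_union hsub
      (finite_and_ncard_le_of_subset_union subset_rfl h₀' h₁') h₂'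

end Quotient

theorem WSC_implies_quotient_degree_bound_general {d N : ℕ}
    (S : Fin N → Euc d → Euc d) (ρ : Fin N → ℝ) (r κ : ℝ) (K : Set (Euc d))
    (hρ0 : ∀ j, 0 < ρ j)
    (hsim : ∀ j a b, dist (S j a) (S j b) = ρ j * dist a b)
    (hr : IsLeast (Set.range ρ) r) (hκ : 0 < κ)
    (hKc : IsCompact K) (hKne : K.Nonempty) (hKinv : K = ⋃ j, S j '' K)
    (γ : ℝ → ℕ) (hγ : ∀ c : ℝ, 0 < c → WSCbound S ρ r K c (γ c)) :
    (∀ v : ℕ × (Euc d → Euc d),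
      {u | (quotIFS S ρ r κ K).Adj v u}.Finite ∧
      {u | (quotIFS S ρ r κ K).Adj v u}.ncard ≤
        γ (2 * κ + Metric.diam K) + γ (r * (2 * κ + Metric.diam K)) +
          γ (r⁻¹ * (2 * κ + Metric.diam K))) ∧
    BddDeg (quotIFS S ρ r κ K) := by
  obtain ⟨⟨j, rfl⟩, -⟩ := hr
  have hc : 0 < 2 * κ + diam K := by have := diam_nonneg (s := K); linarith
  have hdeg := quotIFS_neighborSet_finite_and_ncard_le hρ0 hsim (hρ0 j) hκ.le hKc hKne hKinv
    (hγ _ hc) (hγ _ (mul_pos (hρ0 j) hc)) (hγ _ (mul_pos (inv_pos.2 (hρ0 j)) hc))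
  exact ⟨hdeg, _, hdeg⟩

/-- If the IFS satisfies the weak separation condition with function `γ(·)`,
then every vertex of the quotient graph `(X˜, 𝓔)` has degree at most
`γ(2κ + |K|) + γ(r(2κ + |K|)) + γ(r⁻¹(2κ + |K|))`; in particular `(X˜, 𝓔)` is
of bounded degree. -/
theorem WSC_implies_quotient_degree_bound {d N : ℕ} (hN : 2 ≤ N)
    (S : Fin N → Euc d → Euc d) (ρ : Fin N → ℝ) (r κ : ℝ) (K : Set (Euc d))
    (hρ0 : ∀ j, 0 < ρ j) (hρ1 : ∀ j, ρ j < 1)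
    (hsim : ∀ j a b, dist (S j a) (S j b) = ρ j * dist a b)
    (hr : IsLeast (Set.range ρ) r) (hκ : 0 < κ)
    (hKc : IsCompact K) (hKne : K.Nonempty) (hKinv : K = ⋃ j, S j '' K)
    (γ : ℝ → ℕ) (hγ : ∀ c : ℝ, 0 < c → WSCbound S ρ r K c (γ c)) :
    (∀ v : ℕ × (Euc d → Euc d),
      {u | (quotIFS S ρ r κ K).Adj v u}.Finite ∧
      {u | (quotIFS S ρ r κ K).Adj v u}.ncard ≤
        γ (2 * κ + Metric.diam K) + γ (r * (2 * κ + Metric.diam K)) +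
          γ (r⁻¹ * (2 * κ + Metric.diam K))) ∧
    BddDeg (quotIFS S ρ r κ K) :=
  WSC_implies_quotient_degree_bound_general S ρ r κ K hρ0 hsim hr hκ hKc hKne hKinv γ hγ

end HypIFS
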